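/- arXiv:2007.04876 — 8 statements merged into one kernel-verified Lean document; each statement's English description precedes it below -/
import Mathlib

section
/- Let M ≥ 0 be a real number and let a_0, a_1, a_2, … be a sequence of real numbers with a_0 ≥ 0 such that a_i ≥ 1 + √(M · a_{i−1}) for all integers i ≥ 1. Then a_τ ≥ M^{1 − 2^{−τ+1}} for all integers τ ≥ 1. -/
/-!
Iterating `x ↦ √(M x)` halves the distance of the exponent of `M` to `1`: if `M ^ e ≤ x` then
`M ^ ((1 + e) / 2) ≤ √(M x)`. Starting from `a 1 ≥ 1 = M ^ 0`, induction gives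
`a (n + 1) ≥ M ^ (1 - 2 ^ (-n))`.
-/

open Real

lemma rpow_one_add_div_two_le_sqrt_mul {M x e : ℝ} (hM : 0 ≤ M) (he : 0 ≤ e) (h : M ^ e ≤ x) :
    M ^ ((1 + e) / 2) ≤ √(M * x) := by
  calc M ^ ((1 + e) / 2) = √(M * M ^ e) := by
        rw [sqrt_eq_rpow, ← rpow_one_add' hM (by linarith), ← rpow_mul hM, div_eq_mul_one_div]
    _ ≤ √(M * x) := sqrt_le_sqrt (mul_le_mul_of_nonneg_left h hM)

lemma one_sub_two_rpow_neg_add_one (x : ℝ) :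
    1 - (2 : ℝ) ^ (-(x + 1)) = (1 + (1 - (2 : ℝ) ^ (-x))) / 2 := by
  rw [neg_add, rpow_add two_pos, rpow_neg_one]
  ring

lemma one_sub_two_rpow_neg_nonneg {x : ℝ} (hx : 0 ≤ x) : 0 ≤ 1 - (2 : ℝ) ^ (-x) :=
  sub_nonneg.2 (rpow_le_one_of_one_le_of_nonpos one_le_two (neg_nonpos.2 hx))

theorem seq_growth_general (M : ℝ) (hM : 0 ≤ M) (a : ℕ → ℝ)
    (hrec : ∀ i : ℕ, 1 ≤ i → a i ≥ 1 + Real.sqrt (M * a (i - 1))) :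
    ∀ τ : ℕ, 1 ≤ τ → a τ ≥ M ^ ((1 : ℝ) - (2 : ℝ) ^ (-(τ : ℝ) + 1)) := by
  have hstep (n : ℕ) : 1 + √(M * a n) ≤ a (n + 1) := by
    simpa using hrec (n + 1) n.succ_pos
  have key (n : ℕ) : M ^ (1 - (2 : ℝ) ^ (-(n : ℝ))) ≤ a (n + 1) := by
    induction n with
    | zero => simpa using (le_add_of_nonneg_right (sqrt_nonneg _)).trans (hstep 0)
    | succ n ih =>
      calc M ^ (1 - (2 : ℝ) ^ (-((n + 1 : ℕ) : ℝ)))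
          = M ^ ((1 + (1 - (2 : ℝ) ^ (-(n : ℝ)))) / 2) := by
            rw [Nat.cast_succ, one_sub_two_rpow_neg_add_one]
        _ ≤ √(M * a (n + 1)) :=
            rpow_one_add_div_two_le_sqrt_mul hM (one_sub_two_rpow_neg_nonneg n.cast_nonneg) ih
        _ ≤ a (n + 2) := (le_add_of_nonneg_left zero_le_one).trans (hstep (n + 1))
  intro τ hτ
  obtain ⟨n, rfl⟩ := Nat.exists_eq_add_of_le' hτ
  convert key n using 4
  push_cast
  ring

/-- growth of a sequence satisfying `a i ≥ 1 + √(M * a (i-1))`. -/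
theorem seq_growth (M : ℝ) (hM : 0 ≤ M) (a : ℕ → ℝ) (ha0 : 0 ≤ a 0)
    (hrec : ∀ i : ℕ, 1 ≤ i → a i ≥ 1 + Real.sqrt (M * a (i - 1))) :
    ∀ τ : ℕ, 1 ≤ τ → a τ ≥ M ^ ((1 : ℝ) - (2 : ℝ) ^ (-(τ : ℝ) + 1)) :=
  seq_growth_general M hM a hrec
end

section
/- Let S* be a subset of [N] with |S*| ≤ K attaining the maximum F(v) = max_{S ⊆ [N], |S| ≤ K} R(S, v), let r* = R(S*, v), and define g_i = v_i(r_i − r*) for each i ∈ [N]. Then Σ_{i∈S*} g_i = r*, and for every subset S ⊆ [N] with |S| ≤ K one has Σ_{i∈S} g_i ≤ r*; in particular S* maximizes Σ_{i∈S} g_i over all subsets of [N] of cardinality at most K. -/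
/-- Expected revenue of assortment `S` under the MNL model with rewards `r`
and preference weights `v`. -/
noncomputable def Rev {N : ℕ} (r v : Fin N → ℝ) (S : Finset (Fin N)) : ℝ :=
  (∑ i ∈ S, r i * v i) / (1 + ∑ i ∈ S, v i)

/-!
Clearing the positive denominator `1 + ∑_{i∈S} v_i` turns `R(S, v) ≤ ρ` into
`∑_{i∈S} v_i (r_i - ρ) ≤ ρ`, with equality iff `R(S, v) = ρ`. Taking `ρ = r*`, optimality of `S*`
gives the inequality for every feasible `S`, and `R(S*, v) = r*` gives the equality on `S*`.
-/

open Finset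

namespace Rev

variable {N : ℕ} (r v : Fin N → ℝ) (S : Finset (Fin N))

lemma one_add_sum_pos (hv : ∀ i ∈ S, 0 ≤ v i) : 0 < 1 + ∑ i ∈ S, v i := by
  have := sum_nonneg hv
  linarith

lemma sum_mul_sub_eq (ρ : ℝ) :
    ∑ i ∈ S, v i * (r i - ρ) = ∑ i ∈ S, r i * v i - ρ * (1 + ∑ i ∈ S, v i) + ρ := by
  rw [mul_add, mul_one, sub_add_eq_sub_sub, sub_right_comm, sub_add_cancel, mul_sum,
    ← sum_sub_distrib]
  exact sum_congr rfl fun i _ => by ring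

variable {r v S}

lemma le_iff_sum_mul_sub_le (hv : ∀ i ∈ S, 0 ≤ v i) (ρ : ℝ) :
    Rev r v S ≤ ρ ↔ ∑ i ∈ S, v i * (r i - ρ) ≤ ρ := by
  rw [Rev, div_le_iff₀ (one_add_sum_pos v S hv), sum_mul_sub_eq]
  constructor <;> intro h <;> linarith

lemma sum_mul_sub_self (hv : ∀ i ∈ S, 0 ≤ v i) :
    ∑ i ∈ S, v i * (r i - Rev r v S) = Rev r v S := by
  rw [sum_mul_sub_eq, Rev, div_mul_cancel₀ _ (one_add_sum_pos v S hv).ne', sub_self, zero_add]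

end Rev

theorem optimal_assortment_linearization_general
    (N K : ℕ)
    (r v : Fin N → ℝ) (hv : ∀ i, 0 ≤ v i)
    (Sstar : Finset (Fin N))
    (hSstarOpt : ∀ S : Finset (Fin N), S.card ≤ K → Rev r v S ≤ Rev r v Sstar)
    (rstar : ℝ) (hrstar : rstar = Rev r v Sstar)
    (g : Fin N → ℝ) (hg : ∀ i, g i = v i * (r i - rstar)) :
    (∑ i ∈ Sstar, g i) = rstar ∧
    (∀ S : Finset (Fin N), S.card ≤ K → (∑ i ∈ S, g i) ≤ rstar) ∧
    (∀ S : Finset (Fin N), S.card ≤ K → (∑ i ∈ S, g i) ≤ ∑ i ∈ Sstar, g i) := by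
  obtain rfl : g = fun i => v i * (r i - rstar) := funext hg
  subst hrstar
  have hstar : ∑ i ∈ Sstar, v i * (r i - Rev r v Sstar) = Rev r v Sstar :=
    Rev.sum_mul_sub_self fun i _ => hv i
  have hle : ∀ S : Finset (Fin N), S.card ≤ K →
      ∑ i ∈ S, v i * (r i - Rev r v Sstar) ≤ Rev r v Sstar := fun S hS =>
    (Rev.le_iff_sum_mul_sub_le (fun i _ => hv i) _).1 (hSstarOpt S hS)
  exact ⟨hstar, hle, fun S hS => hstar.symm ▸ hle S hS⟩

/-- if `S*` attains the optimal revenue `r* = F(v)` and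
`g i = v i * (r i - r*)`, then `∑_{i ∈ S*} g i = r*` and every feasible `S`
has `∑_{i ∈ S} g i ≤ r*`; in particular `S*` maximizes `∑_{i ∈ S} g i`. -/
theorem optimal_assortment_linearization
    (N K : ℕ) (hN : 1 ≤ N) (hK1 : 1 ≤ K) (hKN : K ≤ N)
    (r v : Fin N → ℝ) (hr : ∀ i, 0 ≤ r i ∧ r i ≤ 1) (hv : ∀ i, 0 ≤ v i)
    (Sstar : Finset (Fin N)) (hSstarCard : Sstar.card ≤ K)
    (hSstarOpt : ∀ S : Finset (Fin N), S.card ≤ K → Rev r v S ≤ Rev r v Sstar)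
    (rstar : ℝ) (hrstar : rstar = Rev r v Sstar)
    (g : Fin N → ℝ) (hg : ∀ i, g i = v i * (r i - rstar)) :
    (∑ i ∈ Sstar, g i) = rstar ∧
    (∀ S : Finset (Fin N), S.card ≤ K → (∑ i ∈ S, g i) ≤ rstar) ∧
    (∀ S : Finset (Fin N), S.card ≤ K → (∑ i ∈ S, g i) ≤ ∑ i ∈ Sstar, g i) :=
  optimal_assortment_linearization_general N K r v hv Sstar hSstarOpt rstar hrstar g hg
end

section
/- Let r* = F(v) and define g_i = v_i(r_i − r*) for each i ∈ [N]. If S_0 ⊆ [N] with |S_0| ≤ K maximizes Σ_{i∈S} g_i over all subsets S ⊆ [N] with |S| ≤ K, then R(S_0, v) = r*; that is, S_0 is an optimal assortment achieving F(v). -/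
/-- The optimal expected revenue `F(v) = max_{S ⊆ [N], |S| ≤ K} R(S, v)`. -/
noncomputable def Fopt (N K : ℕ) (r v : Fin N → ℝ) : ℝ :=
  Finset.sup'
    ((Finset.univ : Finset (Fin N)).powerset.filter fun S => S.card ≤ K)
    ⟨∅, by simp⟩ (Rev r v)

/-!
Write `D(S) = 1 + ∑_{i ∈ S} v i > 0`. For every assortment and every level `c`,
`∑_{i ∈ S} v i (r i - c) - c = D(S) (R(S, v) - c)`. Taking `c = r*`, every feasible `S`
has `∑_{i ∈ S} g i ≤ r*`, with equality at a revenue-optimal assortment. A maximizer `S₀`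
of the linear objective therefore has `∑_{i ∈ S₀} g i = r*`, i.e. `D(S₀) (R(S₀, v) - r*) = 0`.
-/

open Finset

section Revenue

variable {N : ℕ} (r v : Fin N → ℝ)

lemma one_add_sum_pos (hv : ∀ i, 0 ≤ v i) (S : Finset (Fin N)) : 0 < 1 + ∑ i ∈ S, v i := by
  have := sum_nonneg fun i (_ : i ∈ S) => hv i
  linarith

lemma sum_mul_sub_sub_eq_mul_rev_sub {S : Finset (Fin N)} (hS : 1 + ∑ i ∈ S, v i ≠ 0)
    (c : ℝ) :
    ∑ i ∈ S, v i * (r i - c) - c = (1 + ∑ i ∈ S, v i) * (Rev r v S - c) := by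
  rw [Rev, mul_sub, mul_div_cancel₀ _ hS]
  simp only [mul_sub, sum_sub_distrib, ← sum_mul, mul_comm (v _) (r _)]
  ring

lemma sum_mul_sub_le_iff_rev_le {S : Finset (Fin N)} (hS : 0 < 1 + ∑ i ∈ S, v i) (c : ℝ) :
    ∑ i ∈ S, v i * (r i - c) ≤ c ↔ Rev r v S ≤ c := by
  rw [← sub_nonpos, sum_mul_sub_sub_eq_mul_rev_sub r v hS.ne', ← smul_eq_mul,
    smul_nonpos_iff_nonpos_of_pos_left hS, sub_nonpos]

lemma sum_mul_sub_eq_iff_rev_eq {S : Finset (Fin N)} (hS : 1 + ∑ i ∈ S, v i ≠ 0) (c : ℝ) :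
    ∑ i ∈ S, v i * (r i - c) = c ↔ Rev r v S = c := by
  rw [← sub_eq_zero, sum_mul_sub_sub_eq_mul_rev_sub r v hS, mul_eq_zero, sub_eq_zero]
  simp [hS]

lemma rev_le_fopt (K : ℕ) {S : Finset (Fin N)} (hS : S.card ≤ K) : Rev r v S ≤ Fopt N K r v :=
  le_sup' (Rev r v) (by simp [hS])

lemma exists_rev_eq_fopt (K : ℕ) :
    ∃ S : Finset (Fin N), S.card ≤ K ∧ Rev r v S = Fopt N K r v := by
  obtain ⟨S, hS, hSeq⟩ : ∃ S ∈ _, Fopt N K r v = Rev r v S := exists_mem_eq_sup' _ _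
  exact ⟨S, (mem_filter.1 hS).2, hSeq.symm⟩

end Revenue

theorem linear_maximizer_is_optimal_assortment_general
    (N K : ℕ)
    (r v : Fin N → ℝ) (hv : ∀ i, 0 ≤ v i)
    (rstar : ℝ) (hrstar : rstar = Fopt N K r v)
    (g : Fin N → ℝ) (hg : ∀ i, g i = v i * (r i - rstar))
    (S₀ : Finset (Fin N)) (hS₀Card : S₀.card ≤ K)
    (hS₀Opt : ∀ S : Finset (Fin N), S.card ≤ K → (∑ i ∈ S, g i) ≤ ∑ i ∈ S₀, g i) :
    Rev r v S₀ = rstar := by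
  simp only [hg] at hS₀Opt
  have hfeasible : ∀ S : Finset (Fin N), S.card ≤ K → ∑ i ∈ S, v i * (r i - rstar) ≤ rstar :=
    fun S hS => (sum_mul_sub_le_iff_rev_le r v (one_add_sum_pos v hv S) rstar).2
      (hrstar ▸ rev_le_fopt r v K hS)
  obtain ⟨Sstar, hSstarCard, hSstar⟩ := exists_rev_eq_fopt r v K
  have hSstar_sum : ∑ i ∈ Sstar, v i * (r i - rstar) = rstar :=
    (sum_mul_sub_eq_iff_rev_eq r v (one_add_sum_pos v hv Sstar).ne' rstar).2
      (hSstar.trans hrstar.symm)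
  refine (sum_mul_sub_eq_iff_rev_eq r v (one_add_sum_pos v hv S₀).ne' rstar).1 ?_
  exact le_antisymm (hfeasible S₀ hS₀Card) (hSstar_sum.symm.le.trans (hS₀Opt Sstar hSstarCard))

/-- with `r* = F(v)` and `g i = v i * (r i - r*)`, any feasible
`S₀` maximizing `∑_{i ∈ S} g i` over feasible sets satisfies `R(S₀, v) = r*`. -/
theorem linear_maximizer_is_optimal_assortment
    (N K : ℕ) (hN : 1 ≤ N) (hK1 : 1 ≤ K) (hKN : K ≤ N)
    (r v : Fin N → ℝ) (hr : ∀ i, 0 ≤ r i ∧ r i ≤ 1) (hv : ∀ i, 0 ≤ v i)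
    (rstar : ℝ) (hrstar : rstar = Fopt N K r v)
    (g : Fin N → ℝ) (hg : ∀ i, g i = v i * (r i - rstar))
    (S₀ : Finset (Fin N)) (hS₀Card : S₀.card ≤ K)
    (hS₀Opt : ∀ S : Finset (Fin N), S.card ≤ K → (∑ i ∈ S, g i) ≤ ∑ i ∈ S₀, g i) :
    Rev r v S₀ = rstar :=
  linear_maximizer_is_optimal_assortment_general N K r v hv rstar hrstar g hg S₀ hS₀Card hS₀Opt
end

section
/- Let v and v̂ be two preference vectors with 0 ≤ v_i ≤ v̂_i for all i ∈ [N]. Then F(v̂) ≥ F(v); that is, the optimal expected revenue F(v) = max_{S ⊆ [N], |S| ≤ K} R(S, v) is monotonically non-decreasing in the preference vector. -/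
open Finset

section Revenue

variable {N : ℕ} (r v : Fin N → ℝ) (ρ : ℝ) (S : Finset (Fin N))

theorem le_Rev_iff (hpos : 0 < 1 + ∑ i ∈ S, v i) :
    ρ ≤ Rev r v S ↔ ρ ≤ ∑ i ∈ S, (r i - ρ) * v i := by
  have hexpand : ∑ i ∈ S, (r i - ρ) * v i = ∑ i ∈ S, r i * v i - ρ * ∑ i ∈ S, v i := by
    simp only [sub_mul, sum_sub_distrib, mul_sum]
  rw [Rev, le_div_iff₀ hpos, hexpand]
  constructor <;> intro h <;> linarith

theorem sum_sub_mul_le_sum_filter (hv : ∀ i ∈ S, 0 ≤ v i) :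
    ∑ i ∈ S, (r i - ρ) * v i ≤ ∑ i ∈ S.filter (ρ ≤ r ·), (r i - ρ) * v i := by
  rw [sum_filter]
  refine sum_le_sum fun i hi => ?_
  split_ifs with hri
  · exact le_rfl
  · exact mul_nonpos_of_nonpos_of_nonneg (by linarith [not_le.mp hri]) (hv i hi)

theorem le_Rev_filter_of_le_Rev {vhat : Fin N → ℝ} (hv : ∀ i, 0 ≤ v i)
    (hle : ∀ i, v i ≤ vhat i) (h : ρ ≤ Rev r v S) :
    ρ ≤ Rev r vhat (S.filter (ρ ≤ r ·)) := by
  have hpos : ∀ (w : Fin N → ℝ) (T : Finset (Fin N)), (∀ i, 0 ≤ w i) → 0 < 1 + ∑ i ∈ T, w i :=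
    fun w T hw => by linarith [sum_nonneg fun i (_ : i ∈ T) => hw i]
  rw [le_Rev_iff r v ρ S (hpos v S hv)] at h
  rw [le_Rev_iff r vhat ρ _ (hpos vhat _ fun i => (hv i).trans (hle i))]
  calc ρ ≤ ∑ i ∈ S, (r i - ρ) * v i := h
    _ ≤ ∑ i ∈ S.filter (ρ ≤ r ·), (r i - ρ) * v i :=
      sum_sub_mul_le_sum_filter r v ρ S fun i _ => hv i
    _ ≤ ∑ i ∈ S.filter (ρ ≤ r ·), (r i - ρ) * vhat i :=
      sum_le_sum fun i hi =>
        mul_le_mul_of_nonneg_left (hle i) (sub_nonneg.mpr (mem_filter.mp hi).2)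

end Revenue

section Optimum

variable {N K : ℕ} {r v : Fin N → ℝ}

theorem Rev_le_Fopt {S : Finset (Fin N)} (hS : #S ≤ K) : Rev r v S ≤ Fopt N K r v :=
  le_sup' (Rev r v) (mem_filter.mpr ⟨mem_powerset.mpr (subset_univ S), hS⟩)

theorem exists_Rev_eq_Fopt : ∃ S : Finset (Fin N), #S ≤ K ∧ Rev r v S = Fopt N K r v := by
  obtain ⟨S, hS, heq⟩ :=
    exists_mem_eq_sup' (s := univ.powerset.filter (#· ≤ K)) ⟨∅, by simp⟩ (Rev r v)
  exact ⟨S, (mem_filter.mp hS).2, heq.symm⟩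

end Optimum

theorem Fopt_monotone_general
    (N K : ℕ)
    (r v vhat : Fin N → ℝ)
    (hv : ∀ i, 0 ≤ v i) (hle : ∀ i, v i ≤ vhat i) :
    Fopt N K r v ≤ Fopt N K r vhat := by
  obtain ⟨S, hSK, hS⟩ := exists_Rev_eq_Fopt (K := K) (r := r) (v := v)
  have hρ : Fopt N K r v ≤ Rev r vhat (S.filter (Fopt N K r v ≤ r ·)) :=
    le_Rev_filter_of_le_Rev r v _ S hv hle hS.ge
  exact hρ.trans (Rev_le_Fopt ((card_filter_le S _).trans hSK))

/-- the optimal expected revenue is monotone non-decreasing in the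
preference vector. -/
theorem Fopt_monotone
    (N K : ℕ) (hN : 1 ≤ N) (hK1 : 1 ≤ K) (hKN : K ≤ N)
    (r v vhat : Fin N → ℝ) (hr : ∀ i, 0 ≤ r i ∧ r i ≤ 1)
    (hv : ∀ i, 0 ≤ v i) (hle : ∀ i, v i ≤ vhat i) :
    Fopt N K r v ≤ Fopt N K r vhat :=
  Fopt_monotone_general N K r v vhat hv hle
end

section
/- Let S ⊆ [N] be any subset, and let v, v̂ be preference vectors with r_i ∈ [0,1] and 0 ≤ v_i ≤ v̂_i for all i ∈ [N]. Then (1 + Σ_{i∈S} v_i) · (R(S, v̂) − R(S, v)) ≤ Σ_{i∈S} (v̂_i − v_i). -/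
lemma one_add_mul_div_sub_div_le {a a' b b' : ℝ} (hb : 0 ≤ b) (hbb' : b ≤ b') (ha' : 0 ≤ a') :
    (1 + b) * (a' / (1 + b') - a / (1 + b)) ≤ a' - a := by
  have hb' : 0 < 1 + b' := by linarith
  have hratio : (1 + b) / (1 + b') ≤ 1 := (div_le_one hb').2 (by linarith)
  calc (1 + b) * (a' / (1 + b') - a / (1 + b))
      = a' * ((1 + b) / (1 + b')) - a := by field_simp
    _ ≤ a' * 1 - a := by gcongr
    _ = a' - a := by rw [mul_one]

lemma one_add_sum_mul_rev_sub_rev_le {N : ℕ} (r v vhat : Fin N → ℝ) (S : Finset (Fin N))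
    (hr : ∀ i, 0 ≤ r i) (hv : ∀ i, 0 ≤ v i) (hle : ∀ i, v i ≤ vhat i) :
    (1 + ∑ i ∈ S, v i) * (Rev r vhat S - Rev r v S) ≤ ∑ i ∈ S, r i * (vhat i - v i) := by
  have hnum : 0 ≤ ∑ i ∈ S, r i * vhat i :=
    Finset.sum_nonneg fun i _ => mul_nonneg (hr i) ((hv i).trans (hle i))
  calc (1 + ∑ i ∈ S, v i) * (Rev r vhat S - Rev r v S)
      ≤ ∑ i ∈ S, r i * vhat i - ∑ i ∈ S, r i * v i :=
        one_add_mul_div_sub_div_le (Finset.sum_nonneg fun i _ => hv i)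
          (Finset.sum_le_sum fun i _ => hle i) hnum
    _ = ∑ i ∈ S, r i * (vhat i - v i) := by
        simp only [mul_sub, Finset.sum_sub_distrib]

theorem revenue_gap_bounded_by_ucb_gap_general
    (N : ℕ)
    (r v vhat : Fin N → ℝ) (hr : ∀ i, 0 ≤ r i ∧ r i ≤ 1)
    (hv : ∀ i, 0 ≤ v i) (hle : ∀ i, v i ≤ vhat i)
    (S : Finset (Fin N)) :
    (1 + ∑ i ∈ S, v i) * (Rev r vhat S - Rev r v S) ≤ ∑ i ∈ S, (vhat i - v i) :=
  calc (1 + ∑ i ∈ S, v i) * (Rev r vhat S - Rev r v S)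
      ≤ ∑ i ∈ S, r i * (vhat i - v i) :=
        one_add_sum_mul_rev_sub_rev_le r v vhat S (fun i => (hr i).1) hv hle
    _ ≤ ∑ i ∈ S, (vhat i - v i) :=
        Finset.sum_le_sum fun i _ => mul_le_of_le_one_left (sub_nonneg.2 (hle i)) (hr i).2

/-- for any assortment `S` and preference vectors `v ≤ v̂`,
`(1 + ∑_{i ∈ S} v i) * (R(S, v̂) - R(S, v)) ≤ ∑_{i ∈ S} (v̂ i - v i)`. -/
theorem revenue_gap_bounded_by_ucb_gap
    (N : ℕ) (hN : 1 ≤ N)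
    (r v vhat : Fin N → ℝ) (hr : ∀ i, 0 ≤ r i ∧ r i ≤ 1)
    (hv : ∀ i, 0 ≤ v i) (hle : ∀ i, v i ≤ vhat i)
    (S : Finset (Fin N)) :
    (1 + ∑ i ∈ S, v i) * (Rev r vhat S - Rev r v S) ≤ ∑ i ∈ S, (vhat i - v i) :=
  revenue_gap_bounded_by_ucb_gap_general N r v vhat hr hv hle S
end

section
/- Let θ ∈ [0,1], let v, v̂ be preference vectors with r_i ∈ [0,1] and 0 ≤ v_i ≤ v̂_i for all i ∈ [N], and suppose there exists a subset S' ⊆ [N] with |S'| ≤ K such that R(S', v) ≥ θ. Let Ŝ_θ ⊆ [N] with |Ŝ_θ| ≤ K be any subset maximizing Σ_{i∈S} v̂_i(r_i − θ) over all subsets S ⊆ [N] of cardinality at most K. Then (1 + Σ_{i∈Ŝ_θ} v_i) · (θ − R(Ŝ_θ, v)) ≤ Σ_{i∈Ŝ_θ} (v̂_i − v_i). -/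
/-!
Clearing the denominator, `θ ≤ R(S, v)` says `θ ≤ ∑_{i∈S} v_i (r_i - θ)`, and
`(1 + ∑_{Ŝ} v)(θ - R(Ŝ, v)) = θ - ∑_{Ŝ} v_i (r_i - θ)`. Dropping the items of `S'` with
`r_i < θ` and raising `v` to `v̂` on the rest keeps the assortment feasible and only increases
the sum, so `θ ≤ ∑_{Ŝ} v̂_i (r_i - θ)` by optimality of `Ŝ`. The shortfall is then at most
`∑_{Ŝ} (v̂_i - v_i)(r_i - θ) ≤ ∑_{Ŝ} (v̂_i - v_i)`, as `r_i - θ ≤ 1`.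
-/

open Finset

section WeightedMargins

variable {ι : Type*} (s : Finset ι) {w w' r : ι → ℝ} {θ : ℝ}

theorem sum_mul_sub_le_sum_filter_mul_sub (hw : ∀ i ∈ s, 0 ≤ w i)
    (hww' : ∀ i ∈ s, w i ≤ w' i) :
    ∑ i ∈ s, w i * (r i - θ) ≤ ∑ i ∈ s with θ ≤ r i, w' i * (r i - θ) := by
  rw [sum_filter]
  refine sum_le_sum fun i hi => ?_
  split_ifs with hθr
  · exact mul_le_mul_of_nonneg_right (hww' i hi) (sub_nonneg.mpr hθr)
  · exact mul_nonpos_of_nonneg_of_nonpos (hw i hi) (by linarith [not_le.mp hθr])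

theorem sum_mul_sub_sub_sum_mul_sub_le_sum_sub (hww' : ∀ i ∈ s, w i ≤ w' i)
    (hr : ∀ i ∈ s, r i ≤ 1) (hθ : 0 ≤ θ) :
    ∑ i ∈ s, w' i * (r i - θ) - ∑ i ∈ s, w i * (r i - θ) ≤ ∑ i ∈ s, (w' i - w i) := by
  rw [← sum_sub_distrib]
  refine sum_le_sum fun i hi => ?_
  have hgap : 0 ≤ w' i - w i := sub_nonneg.mpr (hww' i hi)
  nlinarith [hr i hi]

end WeightedMargins

section Revenue

variable {N : ℕ} {r v : Fin N → ℝ} {S : Finset (Fin N)} {θ : ℝ}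

theorem one_add_sum_mul_sub_rev (hv : ∀ i ∈ S, 0 ≤ v i) (θ : ℝ) :
    (1 + ∑ i ∈ S, v i) * (θ - Rev r v S) = θ - ∑ i ∈ S, v i * (r i - θ) := by
  have hden : 1 + ∑ i ∈ S, v i ≠ 0 := by
    linarith [sum_nonneg hv]
  rw [Rev, mul_sub, mul_div_cancel₀ _ hden]
  have hmargin : ∑ i ∈ S, v i * (r i - θ) = ∑ i ∈ S, r i * v i - (∑ i ∈ S, v i) * θ := by
    rw [sum_mul, ← sum_sub_distrib]
    exact sum_congr rfl fun i _ => by ring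
  rw [hmargin]
  ring

theorem le_sum_mul_sub_of_le_rev (hv : ∀ i ∈ S, 0 ≤ v i) (h : θ ≤ Rev r v S) :
    θ ≤ ∑ i ∈ S, v i * (r i - θ) := by
  have hshortfall : (1 + ∑ i ∈ S, v i) * (θ - Rev r v S) ≤ 0 :=
    mul_nonpos_of_nonneg_of_nonpos (by linarith [sum_nonneg hv]) (sub_nonpos.mpr h)
  linarith [one_add_sum_mul_sub_rev (r := r) hv θ]

end Revenue

theorem ucb_maximizer_revenue_shortfall_general
    (N K : ℕ)
    (r v vhat : Fin N → ℝ) (hr : ∀ i, 0 ≤ r i ∧ r i ≤ 1)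
    (hv : ∀ i, 0 ≤ v i) (hle : ∀ i, v i ≤ vhat i)
    (θ : ℝ) (hθ0 : 0 ≤ θ)
    (hfeas : ∃ S' : Finset (Fin N), S'.card ≤ K ∧ θ ≤ Rev r v S')
    (Shat : Finset (Fin N))
    (hShatOpt : ∀ S : Finset (Fin N), S.card ≤ K →
      (∑ i ∈ S, vhat i * (r i - θ)) ≤ ∑ i ∈ Shat, vhat i * (r i - θ)) :
    (1 + ∑ i ∈ Shat, v i) * (θ - Rev r v Shat) ≤ ∑ i ∈ Shat, (vhat i - v i) := by
  obtain ⟨S', hS'card, hS'rev⟩ := hfeas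
  have hS'margin := le_sum_mul_sub_of_le_rev (fun i _ => hv i) hS'rev
  have hpruned := sum_mul_sub_le_sum_filter_mul_sub S' (θ := θ) (r := r)
    (fun i _ => hv i) (fun i _ => hle i)
  have hopt := hShatOpt {i ∈ S' | θ ≤ r i} ((card_filter_le _ _).trans hS'card)
  have hgap := sum_mul_sub_sub_sum_mul_sub_le_sum_sub Shat (r := r)
    (fun i _ => hle i) (fun i _ => (hr i).2) hθ0
  rw [one_add_sum_mul_sub_rev (fun i _ => hv i)]
  linarith

/-- if some feasible assortment has true revenue at least `θ`,
then for any feasible maximizer `Ŝ_θ` of `∑_{i ∈ S} v̂ i * (r i - θ)` (with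
UCB weights `v̂ ≥ v`), the shortfall of its true revenue below `θ` is
controlled by the UCB gaps. -/
theorem ucb_maximizer_revenue_shortfall
    (N K : ℕ) (hN : 1 ≤ N) (hK1 : 1 ≤ K) (hKN : K ≤ N)
    (r v vhat : Fin N → ℝ) (hr : ∀ i, 0 ≤ r i ∧ r i ≤ 1)
    (hv : ∀ i, 0 ≤ v i) (hle : ∀ i, v i ≤ vhat i)
    (θ : ℝ) (hθ0 : 0 ≤ θ) (hθ1 : θ ≤ 1)
    (hfeas : ∃ S' : Finset (Fin N), S'.card ≤ K ∧ θ ≤ Rev r v S')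
    (Shat : Finset (Fin N)) (hShatCard : Shat.card ≤ K)
    (hShatOpt : ∀ S : Finset (Fin N), S.card ≤ K →
      (∑ i ∈ S, vhat i * (r i - θ)) ≤ ∑ i ∈ Shat, vhat i * (r i - θ)) :
    (1 + ∑ i ∈ Shat, v i) * (θ - Rev r v Shat) ≤ ∑ i ∈ Shat, (vhat i - v i) :=
  ucb_maximizer_revenue_shortfall_general N K r v vhat hr hv hle θ hθ0 hfeas Shat hShatOpt
end

section
/- Let p ∈ (0,1), let m ≥ 1 be an integer, and let x_1, …, x_m be independent identically distributed geometric random variables with parameter p, i.e., Pr[x_i = k] = p(1−p)^k for every non-negative integer k. Then Pr[Σ_{i=1}^m x_i < m(1−p)/(2p)] ≤ exp(−m(1−p)/8). -/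
/-!
Chernoff's bound with the exponent `t = -log (1 + p)`, the optimal one for the threshold
`m (1 - p) / (2 p)`. A geometric variable has `E[exp (t X)] = p / (1 - (1 - p) e^t) = (1 + p) / 2`
there, so the tail is at most `((1 + p) ^ ((1 - p) / (2 p)) * (1 + p) / 2) ^ m`. Comparing the
factor with `exp (-(1 - p) / 8)` amounts to `(1 + p) log (1 + p) ≤ 2 p log 2 - p (1 - p) / 4`,
which is convexity of `y log y - y² / 4` on `[0, 2]` applied between `y = 1` and `y = 2`.
-/

open MeasureTheory ProbabilityTheory Real Set

theorem convexOn_mul_log_sub_sq_div_four :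
    ConvexOn ℝ (Icc 0 2) (fun x ↦ x * log x - x ^ 2 / 4) := by
  refine convexOn_of_hasDerivWithinAt2_nonneg (f' := fun x ↦ log x + 1 - x / 2)
    (f'' := fun x ↦ x⁻¹ - 1 / 2) (convex_Icc 0 2)
    (continuous_mul_log.sub (by fun_prop)).continuousOn (fun x hx ↦ ?_) (fun x hx ↦ ?_)
    (fun x hx ↦ ?_) <;> rw [interior_Icc] at hx
  · have hsq : HasDerivAt (fun x : ℝ ↦ x ^ 2 / 4) (x / 2) x :=
      ((hasDerivAt_pow 2 x).div_const 4).congr_deriv (by norm_num; ring)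
    exact ((hasDerivAt_mul_log hx.1.ne').sub hsq).hasDerivWithinAt
  · exact (((hasDerivAt_log hx.1.ne').add_const 1).sub
      ((hasDerivAt_id x).div_const 2)).hasDerivWithinAt
  · have : 2⁻¹ ≤ x⁻¹ := inv_anti₀ hx.1 hx.2.le
    linarith

theorem one_add_mul_log_one_add_le {p : ℝ} (hp0 : 0 ≤ p) (hp1 : p ≤ 1) :
    (1 + p) * log (1 + p) ≤ 2 * p * log 2 - p * (1 - p) / 4 := by
  have h := convexOn_mul_log_sub_sq_div_four.2 (x := 1) (y := 2) (by norm_num) (by norm_num)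
    (by linarith : 0 ≤ 1 - p) hp0 (by ring)
  simp only [smul_eq_mul, log_one] at h
  rw [show (1 - p) * 1 + p * 2 = 1 + p by ring] at h
  nlinarith

theorem geometric_chernoff_factor_le {p : ℝ} (hp0 : 0 < p) (hp1 : p ≤ 1) :
    exp (log (1 + p) * ((1 - p) / (2 * p))) * ((1 + p) / 2) ≤ exp (-(1 - p) / 8) := by
  have hkey := one_add_mul_log_one_add_le hp0.le hp1
  rw [← exp_log (by linarith : 0 < (1 + p) / 2), ← exp_add, exp_le_exp,
    log_div (by linarith) two_ne_zero, ← sub_nonneg]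
  have : -(1 - p) / 8 - (log (1 + p) * ((1 - p) / (2 * p)) + (log (1 + p) - log 2))
      = (2 * p * log 2 - p * (1 - p) / 4 - (1 + p) * log (1 + p)) / (2 * p) := by
    field_simp
    ring
  rw [this]
  apply div_nonneg <;> linarith

namespace ProbabilityTheory

theorem mgf_geometricMeasure {p : unitInterval} (hp : p ≠ 0) {t : ℝ}
    (ht : (1 - p) * exp t < 1) :
    mgf (fun n : ℕ ↦ (n : ℝ)) (geometricMeasure p) t = p / (1 - (1 - p) * exp t) := by
  have hr : 0 ≤ (1 - p : ℝ) * exp t := mul_nonneg (by linarith [p.2.2]) (exp_pos t).le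
  have hterm (n : ℕ) :
      ((1 - p : ℝ) ^ n * p) • exp (t * n) = p * ((1 - p) * exp t) ^ n := by
    rw [smul_eq_mul, mul_comm t, exp_nat_mul, mul_pow]
    ring
  rw [mgf, integral_geometricMeasure hp, tsum_congr hterm, tsum_mul_left,
    tsum_geometric_of_lt_one hr ht, div_eq_mul_inv]

theorem mgf_geometricMeasure_neg_log_one_add {p : unitInterval} (hp : p ≠ 0) :
    mgf (fun n : ℕ ↦ (n : ℝ)) (geometricMeasure p) (-log (1 + p)) = (1 + p) / 2 := by
  have hp0 : 0 < (p : ℝ) := unitInterval.pos_iff_ne_zero.2 hp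
  have hexp : exp (-log (1 + p)) = (1 + (p : ℝ))⁻¹ := by rw [exp_neg, exp_log (by linarith)]
  have hlt : (1 - p) * exp (-log (1 + p)) < 1 := by
    rw [hexp, ← div_eq_mul_inv, div_lt_one (by linarith)]
    linarith
  rw [mgf_geometricMeasure hp hlt, hexp]
  field_simp [hp0.ne']
  ring

variable {Ω : Type*} [MeasurableSpace Ω] {μ : Measure Ω}

theorem map_eq_geometricMeasure {X : Ω → ℕ} (hX : Measurable X) {p : unitInterval}
    (hp : p ≠ 0)
    (hdist : ∀ k, μ {ω | X ω = k} = ENNReal.ofReal (p * (1 - p) ^ k)) :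
    μ.map X = geometricMeasure p := by
  refine Measure.ext_of_singleton fun k ↦ ?_
  rw [Measure.map_apply hX (measurableSet_singleton k), geometricMeasure_singleton hp, mul_comm]
  exact hdist k

theorem mgf_natCast_of_map_eq {X : Ω → ℕ} (hX : Measurable X) {ν : Measure ℕ}
    (hmap : μ.map X = ν) (t : ℝ) :
    mgf (fun ω ↦ (X ω : ℝ)) μ t = mgf (fun n : ℕ ↦ (n : ℝ)) ν t := by
  rw [← hmap, mgf_map hX.aemeasurable (by fun_prop)]
  rfl

theorem iIndepFun.measure_sum_le_le_pow [IsProbabilityMeasure μ] {ι : Type*}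
    [Fintype ι] {X : ι → Ω → ℝ} (hindep : iIndepFun X μ) (hmeas : ∀ i, Measurable (X i))
    {t M : ℝ} (ht : t ≤ 0) (hM : 0 < M) (hmgf : ∀ i, mgf (X i) μ t = M) (b : ℝ) :
    μ.real {ω | ∑ i, X i ω ≤ Fintype.card ι * b}
      ≤ (exp (-t * b) * M) ^ Fintype.card ι := by
  have hint : Integrable (fun ω ↦ exp (t * (∑ i, X i) ω)) μ :=
    hindep.integrable_exp_mul_sum hmeas fun i _ ↦ mgf_pos_iff.1 (hmgf i ▸ hM)
  have h := measure_le_le_exp_mul_mgf (Fintype.card ι * b) ht hint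
  rw [hindep.mgf_sum hmeas, Finset.prod_congr rfl fun i _ ↦ hmgf i, Finset.prod_const,
    Finset.card_univ] at h
  rw [mul_pow, ← exp_nat_mul, mul_left_comm]
  simpa only [Finset.sum_apply, neg_mul] using h

end ProbabilityTheory

theorem geometric_sum_lower_tail_general
    {Ω : Type*} [MeasurableSpace Ω] (μ : Measure Ω) [IsProbabilityMeasure μ]
    (p : ℝ) (hp0 : 0 < p) (hp1 : p < 1)
    (m : ℕ)
    (X : Fin m → Ω → ℕ)
    (hmeas : ∀ i, Measurable (X i))
    (hindep : iIndepFun X μ)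
    (hdist : ∀ (i : Fin m) (k : ℕ),
      μ {ω | X i ω = k} = ENNReal.ofReal (p * (1 - p) ^ k)) :
    μ {ω | (∑ i, (X i ω : ℝ)) < m * (1 - p) / (2 * p)}
      ≤ ENNReal.ofReal (Real.exp (-(m : ℝ) * (1 - p) / 8)) := by
  set q : unitInterval := ⟨p, hp0.le, hp1.le⟩
  have hq : q ≠ 0 := unitInterval.pos_iff_ne_zero.1 hp0
  have hmgf : ∀ i, mgf (fun ω ↦ (X i ω : ℝ)) μ (-log (1 + p)) = (1 + p) / 2 := fun i ↦
    (mgf_natCast_of_map_eq (hmeas i) (map_eq_geometricMeasure (hmeas i) hq (hdist i)) _).trans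
      (mgf_geometricMeasure_neg_log_one_add hq)
  have hchernoff := (hindep.comp (fun _ (n : ℕ) ↦ (n : ℝ)) fun _ ↦ measurable_from_top)
    |>.measure_sum_le_le_pow (fun i ↦ measurable_from_top.comp (hmeas i))
      (neg_nonpos.2 (log_nonneg (by linarith))) (by linarith) hmgf ((1 - p) / (2 * p))
  rw [Fintype.card_fin, neg_neg] at hchernoff
  calc μ {ω | (∑ i, (X i ω : ℝ)) < m * (1 - p) / (2 * p)}
      ≤ μ {ω | (∑ i, (X i ω : ℝ)) ≤ m * ((1 - p) / (2 * p))} :=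
        measure_mono <| ofPred_subset_ofPred.2 fun _ h ↦ (mul_div_assoc (m : ℝ) _ _ ▸ h).le
    _ = ENNReal.ofReal (μ.real {ω | (∑ i, (X i ω : ℝ)) ≤ m * ((1 - p) / (2 * p))}) :=
        (ofReal_measureReal (measure_ne_top _ _)).symm
    _ ≤ ENNReal.ofReal (exp (-(1 - p) / 8) ^ m) := ENNReal.ofReal_le_ofReal <| hchernoff.trans <|
        pow_le_pow_left₀ (by positivity) (geometric_chernoff_factor_le hp0 hp1.le) m
    _ = _ := by rw [← exp_nat_mul]; ring_nf

/-- concentration for sums of i.i.d. geometric random variables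
(`Pr[x_i = k] = p (1-p)^k`): the sum is at least half its mean except with
exponentially small probability. -/
theorem geometric_sum_lower_tail
    {Ω : Type*} [MeasurableSpace Ω] (μ : Measure Ω) [IsProbabilityMeasure μ]
    (p : ℝ) (hp0 : 0 < p) (hp1 : p < 1)
    (m : ℕ) (hm : 1 ≤ m)
    (X : Fin m → Ω → ℕ)
    (hmeas : ∀ i, Measurable (X i))
    (hindep : iIndepFun X μ)
    (hdist : ∀ (i : Fin m) (k : ℕ),
      μ {ω | X i ω = k} = ENNReal.ofReal (p * (1 - p) ^ k)) :
    μ {ω | (∑ i, (X i ω : ℝ)) < m * (1 - p) / (2 * p)}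
      ≤ ENNReal.ofReal (Real.exp (-(m : ℝ) * (1 - p) / 8)) :=
  geometric_sum_lower_tail_general μ p hp0 hp1 m X hmeas hindep hdist
end

section
/- Let N ≥ 1 and K ∈ {0,…,N}, and let ρ and ρ' be two permutations (rankings) of [N] = {1,…,N}. Define S = {i ∈ [N] : ρ(i) ≤ K} and S' = {i ∈ [N] : ρ'(i) ≤ K}. Then the number of ordered pairs (i, j) ∈ [N] × [N] whose relative order differs under the two rankings, i.e., |{(i,j) : 1[ρ(i) > ρ(j)] ≠ 1[ρ'(i) > ρ'(j)]}|, is at least (|S ⊕ S'| / 2)²; equivalently, 4 · |{(i,j) ∈ [N] × [N] : 1[ρ(i) > ρ(j)] ≠ 1[ρ'(i) > ρ'(j)]}| ≥ |S ⊕ S'|². -/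
/-!
If `i` is in the top `K` of `ρ` but not of `ρ'` and `j` is in the top `K` of `ρ'` but not of `ρ`,
then `ρ` ranks `i` before `j` while `ρ'` ranks `j` before `i`, so every pair in
`(S \ S') × (S' \ S)` is discordant. The two top-`K` sets have the same size, hence
`|S \ S'| = |S' \ S| = |S ⊕ S'| / 2`, and this product alone has `(|S ⊕ S'| / 2)²` pairs.
-/

namespace Finset

variable {α : Type*} [DecidableEq α]

lemma card_symmDiff (s t : Finset α) : #(symmDiff s t) = #(s \ t) + #(t \ s) := by
  rw [symmDiff_def, sup_eq_union, card_union_of_disjoint disjoint_sdiff_sdiff]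

lemma card_symmDiff_of_card_eq {s t : Finset α} (h : #s = #t) :
    #(symmDiff s t) = 2 * #(s \ t) := by
  rw [card_symmDiff, card_sdiff_comm h.symm, two_mul]

end Finset

open Finset

lemma card_filter_equiv_apply {α γ : Type*} [Fintype α] [Fintype γ] (e : α ≃ γ) (p : γ → Prop)
    [DecidablePred p] : #{i | p (e i)} = #{j | p j} :=
  card_equiv e (by simp)

lemma sdiff_product_sdiff_subset_discordant {α β : Type*} [Fintype α] [DecidableEq α]
    [LinearOrder β] (f g : α → β) (K : β)
    {s t : Finset α} (hs : ∀ i, i ∈ s ↔ f i < K) (ht : ∀ i, i ∈ t ↔ g i < K) :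
    (s \ t) ×ˢ (t \ s) ⊆ ({ij | ¬(f ij.1 > f ij.2 ↔ g ij.1 > g ij.2)} : Finset (α × α)) := by
  rintro ⟨i, j⟩ hij
  simp only [mem_product, mem_sdiff, hs, ht, not_lt] at hij
  obtain ⟨⟨hfi, hgi⟩, hgj, hfj⟩ := hij
  simp only [mem_filter, mem_univ, true_and, gt_iff_lt]
  intro h
  exact absurd (h.mpr (hgj.trans_le hgi)) (hfi.trans_le hfj).asymm

theorem inversions_lower_bound_symmDiff_general
    (N K : ℕ)
    (ρ ρ' : Equiv.Perm (Fin N))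
    (S S' : Finset (Fin N))
    (hS : S = Finset.univ.filter fun i => (ρ i : ℕ) < K)
    (hS' : S' = Finset.univ.filter fun i => (ρ' i : ℕ) < K) :
    (symmDiff S S').card ^ 2 ≤
      4 * (Finset.univ.filter fun ij : Fin N × Fin N =>
        ¬((ρ ij.1 > ρ ij.2) ↔ (ρ' ij.1 > ρ' ij.2))).card := by
  have hcard : #S = #S' := by
    rw [hS, hS', card_filter_equiv_apply ρ (fun j : Fin N => (j : ℕ) < K),
      card_filter_equiv_apply ρ' (fun j : Fin N => (j : ℕ) < K)]
  have hsub := sdiff_product_sdiff_subset_discordant (ρ · : Fin N → ℕ) (ρ' · : Fin N → ℕ) K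
    (s := S) (t := S') (by simp [hS]) (by simp [hS'])
  calc #(symmDiff S S') ^ 2 = 4 * #((S \ S') ×ˢ (S' \ S)) := by
        rw [card_product, card_symmDiff_of_card_eq hcard, card_sdiff_comm hcard.symm]; ring
    _ ≤ 4 * #{ij : Fin N × Fin N | ¬(ρ ij.1 > ρ ij.2 ↔ ρ' ij.1 > ρ' ij.2)} := by
        refine Nat.mul_le_mul_left 4 ((card_le_card hsub).trans_eq ?_)
        simp only [gt_iff_lt, Fin.lt_def]

/-- if `S` and `S'` are the sets of top-`K` items under two
rankings `ρ` and `ρ'`, then the number of ordered pairs whose relative order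
differs between the two rankings is at least `(|S ⊕ S'| / 2)²`, i.e.
`4 · #{(i,j) : order differs} ≥ |S ⊕ S'|²`. -/
theorem inversions_lower_bound_symmDiff
    (N K : ℕ) (hN : 1 ≤ N) (hKN : K ≤ N)
    (ρ ρ' : Equiv.Perm (Fin N))
    (S S' : Finset (Fin N))
    (hS : S = Finset.univ.filter fun i => (ρ i : ℕ) < K)
    (hS' : S' = Finset.univ.filter fun i => (ρ' i : ℕ) < K) :
    (symmDiff S S').card ^ 2 ≤
      4 * (Finset.univ.filter fun ij : Fin N × Fin N =>
        ¬((ρ ij.1 > ρ ij.2) ↔ (ρ' ij.1 > ρ' ij.2))).card :=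
  inversions_lower_bound_symmDiff_general N K ρ ρ' S S' hS hS'
end
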